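/- arXiv:1509.09253 — 5 statements merged into one kernel-verified Lean document; each statement's English description precedes it below -/
import Mathlib

section
/- Let V be a vector space over ℚ, let I be a finite index set, and let ξ : I → (V →ₗ[ℚ] ℚ) and L : I → V satisfy ξ i (L j) = 0 for all i, j ∈ I. Let F : V →ₗ[ℚ] V be defined by F(w) = w + ∑_{i ∈ I} (ξ i w) • L i. Suppose the family L is linearly independent and there exist v ∈ V and i₀ ∈ I with ξ i₀ v ≠ 0. Then the set of iterates {F^d v : d ∈ ℕ} is infinite. -/
/-- Step 3 of the proof of Theorem 1.1, abstractly: if the functionals `ξ i` vanish on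
all vectors `L j`, the family `L` is linearly independent, and `ξ i₀ v ≠ 0` for some `i₀`,
then the set of iterates of `v` under `F w = w + ∑ i, (ξ i w) • L i` is infinite. -/
theorem transvection_like_orbit_infinite {V : Type*} [AddCommGroup V] [Module ℚ V]
    {I : Type*} [Fintype I] (ξ : I → (V →ₗ[ℚ] ℚ)) (L : I → V)
    (hξL : ∀ i j : I, ξ i (L j) = 0)
    (F : V →ₗ[ℚ] V) (hF : ∀ w : V, F w = w + ∑ i : I, (ξ i w) • L i)
    (hL : LinearIndependent ℚ L)
    (v : V) (i₀ : I) (hv : ξ i₀ v ≠ 0) :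
    {w : V | ∃ d : ℕ, (F ^ d) v = w}.Infinite := by
  set c : V := ∑ i : I, (ξ i v) • L i with hc
  have hξc : ∀ i : I, ξ i c = 0 := by
    intro i
    simp only [hc, map_sum, map_smul, hξL, smul_zero, Finset.sum_const_zero]
  have hiter : ∀ d : ℕ, (F ^ d) v = v + (d : ℚ) • c := by
    intro d
    induction d with
    | zero => simp
    | succ n ih =>
      have hξ' : ∀ i : I, ξ i ((F ^ n) v) = ξ i v := by
        intro i; rw [ih]; simp [hξc i]
      rw [pow_succ', Module.End.mul_apply, hF]
      simp only [hξ']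
      rw [ih, ← hc]
      push_cast
      rw [add_smul, one_smul]
      abel
  have hcne : c ≠ 0 := by
    intro h
    have := linearIndependent_iff'.mp hL Finset.univ (fun i => ξ i v) (by rw [← hc, h]) i₀
      (Finset.mem_univ _)
    exact hv this
  have hinj : Function.Injective (fun d : ℕ => v + (d : ℚ) • c) := by
    intro a b hab
    have h2 : (a : ℚ) • c = (b : ℚ) • c := by
      simpa using hab
    have h3 : ((a : ℚ) - b) • c = 0 := by rw [sub_smul, h2, sub_self]
    have h4 : (a : ℚ) = b := by
      rcases smul_eq_zero.mp h3 with h | h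
      · exact sub_eq_zero.mp h
      · exact absurd h hcne
    exact_mod_cast h4
  exact Set.infinite_of_injective_forall_mem (f := fun d : ℕ => v + (d : ℚ) • c)
    hinj (fun d => ⟨d, (hiter d)⟩)
end

section
/- Let n ≥ 2, let A ≤ Fₙ be the subgroup generated by a₁,…,a_{n−1} (all generators except a₀), and set K₀ = K ⊓ A. Let V₀ := ℚ ⊗[ℤ] Additive (Abelianization K₀) and let ι : V₀ → V be the ℚ-linear map induced by the inclusion K₀ ≤ K. Then ι is injective; moreover, if w₁,…,w_m ∈ Fₙ are elements whose images q(w₁),…,q(w_m) represent the distinct left cosets of q(A) in G, then the subspaces c_{w₁}(range ι),…,c_{w_m}(range ι) of V form an independent family (their sum is direct), where c_w : V → V is the linear map induced by conjugation k ↦ w k w⁻¹ on K. -/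
open TensorProduct

/-- The `ℚ`-linear map on rational abelianized homology induced by an inclusion of
subgroups `K₀ ≤ K`. -/
noncomputable def inclMap {F : Type*} [Group F] {K₀ K : Subgroup F} (h : K₀ ≤ K) :
    (ℚ ⊗[ℤ] Additive (Abelianization K₀)) →ₗ[ℚ] (ℚ ⊗[ℤ] Additive (Abelianization K)) :=
  LinearMap.baseChange ℚ
    ((MonoidHom.toAdditive (Abelianization.map (Subgroup.inclusion h))).toIntLinearMap)

/-- The `ℚ`-linear map on `ℚ ⊗[ℤ] Kᵃᵇ` induced by conjugation `k ↦ w k w⁻¹` on a normal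
subgroup `K`. -/
noncomputable def conjMap {F : Type*} [Group F] (K : Subgroup F) [hN : K.Normal] (w : F) :
    (ℚ ⊗[ℤ] Additive (Abelianization K)) →ₗ[ℚ] (ℚ ⊗[ℤ] Additive (Abelianization K)) :=
  LinearMap.baseChange ℚ
    ((MonoidHom.toAdditive (Abelianization.map
      { toFun := fun k => ⟨w * k * w⁻¹, hN.conj_mem k k.2 w⟩
        map_one' := by ext; simp
        map_mul' := fun x y => by ext; simp only [Subgroup.coe_mul]; group })).toIntLinearMap)

section Fox
variable {n : ℕ} {G : Type} [Group G]

/-- The module `ℚ[G]^n`. -/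
abbrev MM (n : ℕ) (G : Type) [Group G] : Type := Fin n → MonoidAlgebra ℚ G

/-- Left multiplication by `g` on each coordinate. -/
noncomputable def gmul (g : G) (x : MM n G) : MM n G :=
  fun c => MonoidAlgebra.single g 1 * x c

lemma gmul_add (g : G) (x y : MM n G) : gmul g (x + y) = gmul g x + gmul g y := by
  funext c; simp [gmul, mul_add]

lemma gmul_gmul (g h : G) (x : MM n G) : gmul g (gmul h x) = gmul (g * h) x := by
  funext c; simp [gmul, ← mul_assoc, MonoidAlgebra.single_mul_single]

lemma gmul_one_apply (x : MM n G) : gmul 1 x = x := by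
  funext c; simp [gmul, ← MonoidAlgebra.one_def]

lemma gmul_neg (g : G) (x : MM n G) : gmul g (-x) = -gmul g x := by
  funext c; simp [gmul]

lemma gmul_qsmul (g : G) (c : ℚ) (x : MM n G) : gmul g (c • x) = c • gmul g x := by
  funext j; simp [gmul, Pi.smul_apply, mul_smul_comm]

/-- Left multiplication as an additive automorphism. -/
noncomputable def gAdd (g : G) : MM n G ≃+ MM n G where
  toFun := gmul g
  invFun := gmul g⁻¹
  left_inv := fun x => by rw [gmul_gmul, inv_mul_cancel, gmul_one_apply]
  right_inv := fun x => by rw [gmul_gmul, mul_inv_cancel, gmul_one_apply]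
  map_add' := gmul_add g

/-- The action of `G` on `ℚ[G]^n` as a homomorphism into `MulAut`. -/
noncomputable def φG (n : ℕ) (G : Type) [Group G] :
    G →* MulAut (Multiplicative (MM n G)) where
  toFun g := AddEquiv.toMultiplicative (gAdd g)
  map_one' := by
    refine MulEquiv.ext fun x => ?_; show Multiplicative.ofAdd (gmul 1 (Multiplicative.toAdd x)) = x
    rw [gmul_one_apply]; rfl
  map_mul' g h := by
    refine MulEquiv.ext fun x => ?_
    show Multiplicative.ofAdd (gmul (g * h) (Multiplicative.toAdd x)) =
      Multiplicative.ofAdd (gmul g (gmul h (Multiplicative.toAdd x)))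
    rw [gmul_gmul]

variable (q : FreeGroup (Fin n) →* G)

/-- The Magnus/Fox homomorphism into the semidirect product. -/
noncomputable def Φ : FreeGroup (Fin n) →* Multiplicative (MM n G) ⋊[φG n G] G :=
  FreeGroup.lift (fun i =>
    ⟨Multiplicative.ofAdd (Pi.single i 1), q (FreeGroup.of i)⟩)

/-- The total Fox derivative. -/
noncomputable def dd (x : FreeGroup (Fin n)) : MM n G :=
  Multiplicative.toAdd (Φ q x).left

lemma Φ_right (x : FreeGroup (Fin n)) : (Φ q x).right = q x := by
  have : SemidirectProduct.rightHom.comp (Φ q) = q := by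
    apply FreeGroup.ext_hom
    intro i
    simp [Φ, FreeGroup.lift_apply_of, SemidirectProduct.rightHom]
  calc (Φ q x).right = SemidirectProduct.rightHom (Φ q x) := rfl
  _ = q x := by rw [← MonoidHom.comp_apply, this]

lemma dd_of (i : Fin n) : dd q (FreeGroup.of i) = Pi.single i 1 := by
  simp [dd, Φ, FreeGroup.lift_apply_of]

lemma dd_mul (x y : FreeGroup (Fin n)) :
    dd q (x * y) = dd q x + gmul (q x) (dd q y) := by
  unfold dd
  rw [map_mul, SemidirectProduct.mul_left, Φ_right]
  rfl

lemma dd_one : dd q 1 = 0 := by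
  simp [dd]

lemma dd_inv (x : FreeGroup (Fin n)) : dd q x⁻¹ = -(gmul (q x)⁻¹ (dd q x)) := by
  have h := dd_mul q x⁻¹ x
  rw [inv_mul_cancel, dd_one, map_inv] at h
  exact eq_neg_of_add_eq_zero_left h.symm

end Fox

section FoxV
variable {n : ℕ} {G : Type} [Group G] (q : FreeGroup (Fin n) →* G)

lemma abOf_surjective {H : Type*} [Group H] :
    Function.Surjective (Abelianization.of : H → Abelianization H) :=
  fun x => Quot.exists_rep x

/-- Fox derivative as a homomorphism on the kernel. -/
noncomputable def homK : q.ker →* Multiplicative (MM n G) :=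
  MonoidHom.mk' (fun k => Multiplicative.ofAdd (dd q k.1)) (fun a b => by
    have h : ((a * b : q.ker) : FreeGroup (Fin n)) = a.1 * b.1 := rfl
    have h2 : dd q (a.1 * b.1) = dd q a.1 + gmul (q a.1) (dd q b.1) := dd_mul q _ _
    rw [MonoidHom.mem_ker.mp a.2, gmul_one_apply] at h2
    simp [h, h2])

/-- The Fox derivative map on `V = ℚ ⊗ Kᵃᵇ`. -/
noncomputable def φV : (ℚ ⊗[ℤ] Additive (Abelianization q.ker)) →ₗ[ℚ] MM n G :=
  LinearMap.liftBaseChange ℚ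
    ((MonoidHom.toAdditiveLeft (Abelianization.lift (homK q))).toIntLinearMap)

lemma φV_tmul (c : ℚ) (k : q.ker) :
    φV q (c ⊗ₜ[ℤ] (Additive.ofMul (Abelianization.of k))) = c • dd q k.1 := by
  simp [φV, homK]

lemma dd_conj (w k : FreeGroup (Fin n)) (hk : q k = 1) :
    dd q (w * k * w⁻¹) = gmul (q w) (dd q k) := by
  rw [mul_assoc, dd_mul, dd_mul, hk, gmul_one_apply, dd_inv, gmul_add, gmul_neg,
    gmul_gmul, mul_inv_cancel, gmul_one_apply]
  abel

lemma toAdd_map_of {H : Type*} [Group H] {K K' : Subgroup H} (f : K →* K') (k : K) :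
    (MonoidHom.toAdditive (Abelianization.map f)).toIntLinearMap
      (Additive.ofMul (Abelianization.of k)) =
      Additive.ofMul (Abelianization.of (f k)) := by
  exact congrArg Additive.ofMul (Abelianization.map_of f k)

lemma φV_conj (w : FreeGroup (Fin n)) (v : ℚ ⊗[ℤ] Additive (Abelianization q.ker)) :
    φV q (conjMap q.ker w v) = gmul (q w) (φV q v) := by
  induction v using TensorProduct.induction_on with
  | zero => simp only [map_zero]; funext c; simp [gmul]
  | add x y hx hy =>
    rw [map_add, map_add, hx, hy, map_add]; rw [gmul_add]
  | tmul c x =>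
    obtain ⟨k, rfl⟩ : ∃ k, Additive.ofMul (Abelianization.of k) = x := by
      obtain ⟨k, hk⟩ := abOf_surjective (Additive.toMul x)
      exact ⟨k, congrArg Additive.ofMul hk⟩
    rw [conjMap, LinearMap.baseChange_tmul, toAdd_map_of, φV_tmul, φV_tmul]
    have h2 : (c • dd q (w * k.1 * w⁻¹) : MM n G) = gmul (q w) (c • dd q k.1) := by
      rw [dd_conj q w k.1 (MonoidHom.mem_ker.mp k.2), gmul_qsmul]
    exact h2

end FoxV

section Transversal
variable {n : ℕ} {G : Type} [Group G]

/-- A single letter as an element of the free group. -/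
def lett (p : Fin n × Bool) : FreeGroup (Fin n) := FreeGroup.mk [p]

lemma lett_true (i : Fin n) : lett (i, true) = FreeGroup.of i := rfl

lemma lett_false (i : Fin n) : lett (i, false) = (FreeGroup.of i)⁻¹ := by
  show FreeGroup.mk [(i, false)] = (FreeGroup.mk [(i, true)])⁻¹
  rw [FreeGroup.inv_mk]
  rfl

lemma mk_eq_prod_lett (L : List (Fin n × Bool)) :
    FreeGroup.mk L = (L.map lett).prod := by
  induction L with
  | nil => simp [← FreeGroup.one_eq_mk]
  | cons p L ih =>
    have : FreeGroup.mk (p :: L) = lett p * FreeGroup.mk L := by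
      rw [lett, FreeGroup.mul_mk]; rfl
    rw [this, ih, List.map_cons, List.prod_cons]

variable (Sset : Set (Fin n))

attribute [local instance] Classical.propDecidable

/-- The subgroup generated by the chosen letters. -/
def Asub : Subgroup (FreeGroup (Fin n)) := Subgroup.closure (FreeGroup.of '' Sset)

lemma lett_mem_Asub {p : Fin n × Bool} (hp : p.1 ∈ Sset) : lett p ∈ Asub Sset := by
  obtain ⟨i, b⟩ := p
  have hi : FreeGroup.of i ∈ Asub Sset :=
    Subgroup.subset_closure ⟨i, hp, rfl⟩
  cases b
  · rw [lett_false]; exact inv_mem hi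
  · rw [lett_true]; exact hi

lemma mk_mem_Asub {L : List (Fin n × Bool)} (hL : ∀ p ∈ L, p.1 ∈ Sset) :
    FreeGroup.mk L ∈ Asub Sset := by
  rw [mk_eq_prod_lett]
  induction L with
  | nil => exact one_mem _
  | cons p L ih =>
    rw [List.map_cons, List.prod_cons]
    exact mul_mem (lett_mem_Asub Sset (hL p (by simp)))
      (ih fun p hp => hL p (List.mem_cons_of_mem _ hp))

lemma exists_word_of_mem_Asub {a : FreeGroup (Fin n)} (ha : a ∈ Asub Sset) :
    ∃ L : List (Fin n × Bool), (∀ p ∈ L, p.1 ∈ Sset) ∧ FreeGroup.mk L = a := by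
  induction ha using Subgroup.closure_induction with
  | mem x hx =>
    obtain ⟨i, hi, rfl⟩ := hx
    exact ⟨[(i, true)], by simpa using hi, rfl⟩
  | one => exact ⟨[], by simp, rfl⟩
  | mul x y hx hy ihx ihy =>
    obtain ⟨L1, hL1, rfl⟩ := ihx
    obtain ⟨L2, hL2, rfl⟩ := ihy
    exact ⟨L1 ++ L2, by
      intro p hp
      rcases List.mem_append.mp hp with h | h
      exacts [hL1 p h, hL2 p h], (FreeGroup.mul_mk).symm⟩
  | inv x hx ihx =>
    obtain ⟨L, hL, rfl⟩ := ihx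
    refine ⟨FreeGroup.invRev L, ?_, (FreeGroup.inv_mk).symm⟩
    intro p hp
    rw [FreeGroup.invRev] at hp
    obtain ⟨r, hr, rfl⟩ := List.mem_map.mp (List.mem_reverse.mp hp)
    exact hL r hr

variable (q : FreeGroup (Fin n) →* G)

/-- The image of `A` in `G`. -/
def Hsub : Subgroup G := Subgroup.map q (Asub Sset)

lemma exists_word (h : ↥(Hsub Sset q)) :
    ∃ k, ∃ L : List (Fin n × Bool),
      (∀ p ∈ L, p.1 ∈ Sset) ∧ L.length = k ∧ q (FreeGroup.mk L) = ↑h := by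
  obtain ⟨a, ha, hqa⟩ := h.2
  obtain ⟨L, hL, rfl⟩ := exists_word_of_mem_Asub Sset ha
  exact ⟨L.length, L, hL, rfl, hqa⟩

/-- Minimal word length of a coset representative. -/
noncomputable def ℓw (h : ↥(Hsub Sset q)) : ℕ := Nat.find (exists_word Sset q h)

/-- A chosen word of minimal length. -/
noncomputable def Lh (h : ↥(Hsub Sset q)) : List (Fin n × Bool) :=
  (Nat.find_spec (exists_word Sset q h)).choose

lemma Lh_spec (h : ↥(Hsub Sset q)) :
    (∀ p ∈ Lh Sset q h, p.1 ∈ Sset) ∧ (Lh Sset q h).length = ℓw Sset q h ∧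
      q (FreeGroup.mk (Lh Sset q h)) = ↑h :=
  (Nat.find_spec (exists_word Sset q h)).choose_spec

/-- The previous coset in the recursive transversal construction. -/
noncomputable def prevH (h : ↥(Hsub Sset q)) (h0 : Lh Sset q h ≠ []) : ↥(Hsub Sset q) :=
  ⟨↑h * (q (lett ((Lh Sset q h).getLast h0)))⁻¹,
    mul_mem h.2 (inv_mem ⟨lett ((Lh Sset q h).getLast h0),
      lett_mem_Asub Sset ((Lh_spec Sset q h).1 _ (List.getLast_mem h0)), rfl⟩)⟩

lemma ℓw_prevH_lt (h : ↥(Hsub Sset q)) (h0 : Lh Sset q h ≠ []) :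
    ℓw Sset q (prevH Sset q h h0) < ℓw Sset q h := by
  obtain ⟨h1, h2, h3⟩ := Lh_spec Sset q h
  have hlen : (Lh Sset q h).length ≠ 0 := by
    simpa using fun hc => h0 (List.length_eq_zero_iff.mp hc)
  have key : ℓw Sset q (prevH Sset q h h0) ≤ (Lh Sset q h).length - 1 := by
    apply Nat.find_le
    refine ⟨(Lh Sset q h).dropLast, ?_, by simp, ?_⟩
    · intro p hp
      exact h1 p (List.dropLast_subset _ hp)
    · have hsplit : FreeGroup.mk ((Lh Sset q h).dropLast) *
          lett ((Lh Sset q h).getLast h0) = FreeGroup.mk (Lh Sset q h) := by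
        rw [lett, FreeGroup.mul_mk, List.dropLast_append_getLast h0]
      show q (FreeGroup.mk (Lh Sset q h).dropLast) = ↑(prevH Sset q h h0)
      have := congrArg q hsplit
      rw [map_mul] at this
      show _ = ↑h * (q (lett ((Lh Sset q h).getLast h0)))⁻¹
      rw [← h3, ← this]
      group
  rw [h2] at key
  omega

/-- The Schreier transversal. -/
noncomputable def STrans (h : ↥(Hsub Sset q)) : FreeGroup (Fin n) :=
  if h0 : Lh Sset q h = [] then 1
  else STrans (prevH Sset q h h0) * lett ((Lh Sset q h).getLast h0)
termination_by ℓw Sset q h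
decreasing_by exact ℓw_prevH_lt Sset q h h0

lemma STrans_spec (h : ↥(Hsub Sset q)) : STrans Sset q h ∈ Asub Sset ∧ q (STrans Sset q h) = ↑h := by
  suffices H : ∀ N (h : ↥(Hsub Sset q)), ℓw Sset q h ≤ N →
      STrans Sset q h ∈ Asub Sset ∧ q (STrans Sset q h) = ↑h from H _ h le_rfl
  intro N
  induction N with
  | zero =>
    intro h hN
    have h0 : Lh Sset q h = [] := by
      have := (Lh_spec Sset q h).2.1
      rw [List.length_eq_zero_iff.symm]
      omega
    rw [STrans, dif_pos h0]
    have : q (FreeGroup.mk ([] : List (Fin n × Bool))) = ↑h := by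
      rw [← h0]; exact (Lh_spec Sset q h).2.2
    rw [← FreeGroup.one_eq_mk, map_one] at this
    exact ⟨one_mem _, by rw [map_one, this]⟩
  | succ N ih =>
    intro h hN
    by_cases h0 : Lh Sset q h = []
    · rw [STrans, dif_pos h0]
      have : q (FreeGroup.mk ([] : List (Fin n × Bool))) = ↑h := by
        rw [← h0]; exact (Lh_spec Sset q h).2.2
      rw [← FreeGroup.one_eq_mk, map_one] at this
      exact ⟨one_mem _, by rw [map_one, this]⟩
    · rw [STrans, dif_neg h0]
      have hlt := ℓw_prevH_lt Sset q h h0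
      obtain ⟨ih1, ih2⟩ := ih (prevH Sset q h h0) (by omega)
      constructor
      · exact mul_mem ih1 (lett_mem_Asub Sset ((Lh_spec Sset q h).1 _ (List.getLast_mem h0)))
      · rw [map_mul, ih2]
        show ↑h * (q (lett ((Lh Sset q h).getLast h0)))⁻¹ * _ = ↑h
        group

lemma STrans_one : STrans Sset q 1 = 1 := by
  have hle : ℓw Sset q 1 ≤ 0 := Nat.find_le ⟨[], by simp, rfl, by
    rw [← FreeGroup.one_eq_mk, map_one]; rfl⟩
  have h0 : Lh Sset q 1 = [] := by
    have := (Lh_spec Sset q 1).2.1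
    rw [List.length_eq_zero_iff.symm]
    omega
  rw [STrans, dif_pos h0]

end Transversal

section Schreier
variable {n : ℕ} {G : Type} [Group G] (Sset : Set (Fin n)) (q : FreeGroup (Fin n) →* G)

lemma qof_mem {i : Fin n} (hi : i ∈ Sset) : q (FreeGroup.of i) ∈ Hsub Sset q :=
  ⟨FreeGroup.of i, Subgroup.subset_closure ⟨i, hi, rfl⟩, rfl⟩

/-- Multiplying a coset by a generator. -/
noncomputable def hmul (h : ↥(Hsub Sset q)) {i : Fin n} (hi : i ∈ Sset) : ↥(Hsub Sset q) :=
  ⟨↑h * q (FreeGroup.of i), mul_mem h.2 (qof_mem Sset q hi)⟩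

/-- Basis vectors of `ℚ[G]^n`. -/
noncomputable def Bv (g : G) (i : Fin n) : MM n G :=
  Pi.single i (MonoidAlgebra.single g 1)

lemma gmul_pi_single (g : G) (i : Fin n) :
    gmul g (Pi.single i (1 : MonoidAlgebra ℚ G)) = Bv g i := by
  funext c
  show MonoidAlgebra.single g 1 * _ = _
  rcases eq_or_ne c i with rfl | hc
  · rw [Pi.single_eq_same, Bv, Pi.single_eq_same, mul_one]
  · rw [Pi.single_eq_of_ne hc, Bv, Pi.single_eq_of_ne hc, mul_zero]

lemma gmul_Bv (g g' : G) (i : Fin n) : gmul g (Bv g' i) = Bv (g * g') i := by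
  funext c
  show MonoidAlgebra.single g 1 * _ = _
  rcases eq_or_ne c i with rfl | hc
  · rw [Bv, Pi.single_eq_same, Bv, Pi.single_eq_same, MonoidAlgebra.single_mul_single, one_mul]
  · rw [Bv, Pi.single_eq_of_ne hc, Bv, Pi.single_eq_of_ne hc, mul_zero]

/-- The set of "tree" pairs: those whose Schreier generator is trivial. -/
def Triv : Set (G × Fin n) :=
  {p | ∃ (hg : p.1 ∈ Hsub Sset q) (hi : p.2 ∈ Sset),
    STrans Sset q ⟨p.1, hg⟩ * FreeGroup.of p.2 = STrans Sset q (hmul Sset q ⟨p.1, hg⟩ hi)}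

/-- Span of the tree basis vectors. -/
noncomputable def Dspan : Submodule ℚ (MM n G) :=
  Submodule.span ℚ ((fun p => Bv p.1 p.2) '' Triv Sset q)

lemma tree_step (h h' : ↥(Hsub Sset q)) (p : Fin n × Bool) (hpS : p.1 ∈ Sset)
    (hval : (↑h' : G) = ↑h * (q (lett p))⁻¹)
    (hSTh : STrans Sset q h = STrans Sset q h' * lett p)
    (ihm : dd q (STrans Sset q h') ∈ Dspan Sset q) :
    dd q (STrans Sset q h) ∈ Dspan Sset q := by
  rw [hSTh, dd_mul, (STrans_spec Sset q h').2]
  refine add_mem ihm ?_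
  obtain ⟨i, b⟩ := p
  cases b
  · -- b = false : the last letter is (of i)⁻¹
    rw [lett_false] at hval hSTh ⊢
    rw [dd_inv, dd_of, gmul_neg, gmul_gmul, gmul_pi_single]
    have hval2 : (↑h' : G) = ↑h * q (FreeGroup.of i) := by rw [hval, map_inv, inv_inv]
    have hcoe : (↑h' : G) * (q (FreeGroup.of i))⁻¹ = ↑h := by rw [hval2]; group
    rw [hcoe]
    refine neg_mem (Submodule.subset_span ⟨((↑h : G), i), ⟨h.2, hpS, ?_⟩, rfl⟩)
    show STrans Sset q h * FreeGroup.of i = STrans Sset q (hmul Sset q h hpS)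
    have h2 : hmul Sset q h hpS = h' := Subtype.ext hval2.symm
    rw [h2, hSTh, mul_assoc, inv_mul_cancel, mul_one]
  · -- b = true : the last letter is of i
    rw [lett_true] at hval hSTh ⊢
    rw [dd_of, gmul_pi_single]
    refine Submodule.subset_span ⟨((↑h' : G), i), ⟨h'.2, hpS, ?_⟩, rfl⟩
    show STrans Sset q h' * FreeGroup.of i = STrans Sset q (hmul Sset q h' hpS)
    have h2 : hmul Sset q h' hpS = h := by
      apply Subtype.ext
      show (↑h' : G) * q (FreeGroup.of i) = ↑h
      rw [hval]; group
    rw [h2, hSTh]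

lemma dd_STrans_mem_Dspan (h : ↥(Hsub Sset q)) :
    dd q (STrans Sset q h) ∈ Dspan Sset q := by
  suffices H : ∀ N (h : ↥(Hsub Sset q)), ℓw Sset q h ≤ N →
      dd q (STrans Sset q h) ∈ Dspan Sset q from H _ h le_rfl
  intro N
  induction N with
  | zero =>
    intro h hN
    have h0 : Lh Sset q h = [] := by
      have := (Lh_spec Sset q h).2.1
      rw [List.length_eq_zero_iff.symm]
      omega
    rw [STrans, dif_pos h0, dd_one]
    exact zero_mem _
  | succ N ih =>
    intro h hN
    by_cases h0 : Lh Sset q h = []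
    · rw [STrans, dif_pos h0, dd_one]
      exact zero_mem _
    · have hlt := ℓw_prevH_lt Sset q h h0
      exact tree_step Sset q h (prevH Sset q h h0) ((Lh Sset q h).getLast h0)
        ((Lh_spec Sset q h).1 _ (List.getLast_mem h0)) rfl
        (by rw [STrans, dif_neg h0]) (ih _ (by omega))

end Schreier



section Generation
variable {n : ℕ} {G : Type} [Group G] (Sset : Set (Fin n)) (q : FreeGroup (Fin n) →* G)

/-- The Schreier generator attached to a pair. -/
noncomputable def schr (h : ↥(Hsub Sset q)) {i : Fin n} (hi : i ∈ Sset) : FreeGroup (Fin n) :=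
  STrans Sset q h * FreeGroup.of i * (STrans Sset q (hmul Sset q h hi))⁻¹

lemma schr_mem (h : ↥(Hsub Sset q)) {i : Fin n} (hi : i ∈ Sset) :
    schr Sset q h hi ∈ q.ker ⊓ Asub Sset := by
  rw [Subgroup.mem_inf]
  constructor
  · rw [MonoidHom.mem_ker, schr, map_mul, map_mul, map_inv,
      (STrans_spec Sset q h).2, (STrans_spec Sset q _).2]
    show (↑h : G) * q (FreeGroup.of i) * ((↑h : G) * q (FreeGroup.of i))⁻¹ = 1
    group
  · exact mul_mem (mul_mem (STrans_spec Sset q h).1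
      (Subgroup.subset_closure ⟨i, hi, rfl⟩)) (inv_mem (STrans_spec Sset q _).1)

/-- The subgroup generated by the Schreier generators. -/
noncomputable def Csub : Subgroup (FreeGroup (Fin n)) :=
  Subgroup.closure {x | ∃ (h : ↥(Hsub Sset q)) (i : Fin n) (hi : i ∈ Sset), x = schr Sset q h hi}

lemma Csub_le : Csub Sset q ≤ q.ker ⊓ Asub Sset := by
  rw [Csub, Subgroup.closure_le]
  rintro x ⟨h, i, hi, rfl⟩
  exact schr_mem Sset q h hi

lemma mem_Csub_of_mem (y : FreeGroup (Fin n)) (hy : y ∈ Asub Sset) :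
    ∀ h : ↥(Hsub Sset q),
      STrans Sset q h * y * (STrans Sset q (h * ⟨q y, Subgroup.mem_map_of_mem q hy⟩))⁻¹ ∈
        Csub Sset q := by
  induction hy using Subgroup.closure_induction with
  | mem x hx =>
    obtain ⟨i, hi, rfl⟩ := hx
    intro h
    have he : (h * ⟨q (FreeGroup.of i), Subgroup.mem_map_of_mem q (Subgroup.subset_closure ⟨i, hi, rfl⟩)⟩ :
        ↥(Hsub Sset q)) = hmul Sset q h hi := rfl
    rw [he]
    exact Subgroup.subset_closure ⟨h, i, hi, rfl⟩
  | one =>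
    intro h
    have he : (h * ⟨q 1, Subgroup.mem_map_of_mem q (one_mem _)⟩ : ↥(Hsub Sset q)) = h := by
      apply Subtype.ext
      show (↑h : G) * q 1 = ↑h
      rw [map_one, mul_one]
    rw [he, mul_one, mul_inv_cancel]
    exact one_mem _
  | mul x y hx hy ihx ihy =>
    intro h
    have e1 : (h * ⟨q (x * y), Subgroup.mem_map_of_mem q (mul_mem hx hy)⟩ : ↥(Hsub Sset q)) =
        (h * ⟨q x, Subgroup.mem_map_of_mem q hx⟩) * ⟨q y, Subgroup.mem_map_of_mem q hy⟩ := by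
      apply Subtype.ext
      show (↑h : G) * q (x * y) = ↑h * q x * q y
      rw [map_mul, mul_assoc]
    rw [e1]
    have := mul_mem (ihx h) (ihy (h * ⟨q x, Subgroup.mem_map_of_mem q hx⟩))
    convert this using 1
    group
  | inv x hx ihx =>
    intro h
    have e1 : (h * ⟨q x⁻¹, Subgroup.mem_map_of_mem q (inv_mem hx)⟩) *
        ⟨q x, Subgroup.mem_map_of_mem q hx⟩ = h := by
      apply Subtype.ext
      show (↑h : G) * q x⁻¹ * q x = ↑h
      rw [map_inv]; group
    have := inv_mem (ihx (h * ⟨q x⁻¹, Subgroup.mem_map_of_mem q (inv_mem hx)⟩))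
    rw [e1] at this
    convert this using 1
    group

lemma ker_inf_eq_Csub : q.ker ⊓ Asub Sset = Csub Sset q := by
  refine le_antisymm ?_ (Csub_le Sset q)
  intro x hx
  obtain ⟨hx1, hx2⟩ := Subgroup.mem_inf.mp hx
  have := mem_Csub_of_mem Sset q x hx2 1
  have he : ((1 : ↥(Hsub Sset q)) * ⟨q x, Subgroup.mem_map_of_mem q hx2⟩ : ↥(Hsub Sset q)) = 1 := by
    apply Subtype.ext
    show (1 : G) * q x = 1
    rw [MonoidHom.mem_ker.mp hx1, mul_one]
  rw [he, STrans_one, one_mul, inv_one, mul_one] at this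
  exact this

end Generation

section Span
variable {n : ℕ} {G : Type} [Group G] (Sset : Set (Fin n)) (q : FreeGroup (Fin n) →* G)

/-- The generators of `ℚ ⊗ K₀ᵃᵇ` coming from Schreier generators. -/
noncomputable def genV (p : ↥(Hsub Sset q) × ↥Sset) :
    ℚ ⊗[ℤ] Additive (Abelianization ↥(q.ker ⊓ Asub Sset)) :=
  (1 : ℚ) ⊗ₜ[ℤ] Additive.ofMul (Abelianization.of
    (⟨schr Sset q p.1 p.2.2, schr_mem Sset q p.1 p.2.2⟩ : ↥(q.ker ⊓ Asub Sset)))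

lemma span_genV : Submodule.span ℚ (Set.range (genV Sset q)) = ⊤ := by
  have key : ∀ x (hx' : x ∈ Csub Sset q) (hx : x ∈ q.ker ⊓ Asub Sset),
      ((1 : ℚ) ⊗ₜ[ℤ] Additive.ofMul (Abelianization.of (⟨x, hx⟩ : ↥(q.ker ⊓ Asub Sset))))
        ∈ Submodule.span ℚ (Set.range (genV Sset q)) := by
    intro x hx'
    induction hx' using Subgroup.closure_induction with
    | mem x hxg =>
      intro hx
      obtain ⟨h, i, hi, rfl⟩ := hxg
      exact Submodule.subset_span ⟨(h, ⟨i, hi⟩), rfl⟩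
    | one =>
      intro hx
      have h1 : (⟨1, hx⟩ : ↥(q.ker ⊓ Asub Sset)) = 1 := rfl
      rw [h1, map_one, ofMul_one, tmul_zero]
      exact zero_mem _
    | mul x y hxc hyc ihx ihy =>
      intro hxy
      have hxm : x ∈ q.ker ⊓ Asub Sset := Csub_le Sset q hxc
      have hym : y ∈ q.ker ⊓ Asub Sset := Csub_le Sset q hyc
      have h1 : (⟨x * y, hxy⟩ : ↥(q.ker ⊓ Asub Sset)) = ⟨x, hxm⟩ * ⟨y, hym⟩ := rfl
      rw [h1, map_mul, ofMul_mul, tmul_add]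
      exact add_mem (ihx hxm) (ihy hym)
    | inv x hxc ihx =>
      intro hxi
      have hxm : x ∈ q.ker ⊓ Asub Sset := Csub_le Sset q hxc
      have h1 : (⟨x⁻¹, hxi⟩ : ↥(q.ker ⊓ Asub Sset)) = (⟨x, hxm⟩)⁻¹ := rfl
      rw [h1, map_inv, ofMul_inv, tmul_neg]
      exact neg_mem (ihx hxm)
  rw [eq_top_iff]
  rintro v -
  induction v using TensorProduct.induction_on with
  | zero => exact zero_mem _
  | add x y ihx ihy => exact add_mem ihx ihy
  | tmul c x =>
    obtain ⟨k, rfl⟩ : ∃ k, Additive.ofMul (Abelianization.of k) = x := by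
      obtain ⟨k, hk⟩ := abOf_surjective (Additive.toMul x)
      exact ⟨k, congrArg Additive.ofMul hk⟩
    have h2 : (c ⊗ₜ[ℤ] Additive.ofMul (Abelianization.of k) :
        ℚ ⊗[ℤ] Additive (Abelianization ↥(q.ker ⊓ Asub Sset))) =
        c • ((1 : ℚ) ⊗ₜ[ℤ] Additive.ofMul (Abelianization.of k)) := by
      rw [TensorProduct.smul_tmul', smul_eq_mul, mul_one]
    rw [h2]
    have hk' : k.1 ∈ Csub Sset q := by
      rw [← ker_inf_eq_Csub]; exact k.2
    exact Submodule.smul_mem _ _ (key k.1 hk' k.2)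

attribute [local instance] Classical.propDecidable

/-- Coordinate functional on `ℚ[G]^n`. -/
noncomputable def coord (j : Fin n) (g : G) : MM n G →ₗ[ℚ] ℚ where
  toFun x := (x j).coeff g
  map_add' x y := rfl
  map_smul' c x := rfl

lemma coord_Bv_self (j : Fin n) (g : G) : coord j g (Bv g j) = 1 := by
  show ((Bv g j) j).coeff g = 1
  rw [Bv, Pi.single_eq_same, MonoidAlgebra.single_apply, if_pos rfl]

lemma coord_Bv_ne (j : Fin n) (g : G) (g' : G) (i : Fin n)
    (hne : ((g' : G), i) ≠ (g, j)) : coord j g (Bv g' i) = 0 := by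
  show ((Bv g' i) j).coeff g = 0
  rw [Bv]
  rcases eq_or_ne i j with rfl | hij
  · have hg : g' ≠ g := by
      intro hgg
      exact hne (by rw [hgg])
    rw [Pi.single_eq_same, MonoidAlgebra.single_apply, if_neg hg]
  · rw [Pi.single_eq_of_ne (Ne.symm hij)]
    simp

lemma coord_Dspan (j : Fin n) (g : G) (hng : ((g : G), j) ∉ Triv Sset q) :
    ∀ w ∈ Dspan Sset q, coord j g w = 0 := by
  intro w hw
  induction hw using Submodule.span_induction with
  | mem x hx =>
    obtain ⟨p, hp, rfl⟩ := hx
    refine coord_Bv_ne j g p.1 p.2 ?_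
    intro hc
    exact hng (hc ▸ hp)
  | zero => exact map_zero _
  | add x y hx hy ihx ihy => rw [map_add, ihx, ihy, add_zero]
  | smul c x hx ihx => rw [map_smul, ihx, smul_zero]

lemma dd_schr (h : ↥(Hsub Sset q)) {i : Fin n} (hi : i ∈ Sset) :
    dd q (schr Sset q h hi) = dd q (STrans Sset q h) + Bv ((h : G)) i
      - dd q (STrans Sset q (hmul Sset q h hi)) := by
  rw [schr, dd_mul, dd_mul, dd_of, (STrans_spec Sset q h).2, gmul_pi_single, dd_inv,
    map_mul, (STrans_spec Sset q h).2, gmul_neg, gmul_gmul]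
  have h1 : q (STrans Sset q (hmul Sset q h hi)) = (↑h : G) * q (FreeGroup.of i) :=
    (STrans_spec Sset q _).2
  rw [h1, mul_inv_cancel, gmul_one_apply]
  abel

end Span

section Inj
variable {n : ℕ} {G : Type} [Group G] (Sset : Set (Fin n)) (q : FreeGroup (Fin n) →* G)

attribute [local instance] Classical.propDecidable

lemma φV_incl (c : ℚ) (k : ↥(q.ker ⊓ Asub Sset)) :
    φV q (inclMap (inf_le_left : q.ker ⊓ Asub Sset ≤ q.ker)
      (c ⊗ₜ[ℤ] Additive.ofMul (Abelianization.of k))) = c • dd q k.1 := by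
  rw [inclMap, LinearMap.baseChange_tmul, toAdd_map_of, φV_tmul]
  rfl

lemma schr_triv (p : ↥(Hsub Sset q) × ↥Sset)
    (ht : (((p.1 : G)), ((p.2 : Fin n))) ∈ Triv Sset q) :
    schr Sset q p.1 p.2.2 = 1 := by
  obtain ⟨hg, hi, heq⟩ := ht
  rw [schr]
  rw [show STrans Sset q p.1 * FreeGroup.of ↑p.2 = STrans Sset q (hmul Sset q p.1 p.2.2)
    from heq]
  rw [mul_inv_cancel]

lemma psi_inj (v : ℚ ⊗[ℤ] Additive (Abelianization ↥(q.ker ⊓ Asub Sset)))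
    (hv : φV q (inclMap (inf_le_left : q.ker ⊓ Asub Sset ≤ q.ker) v) = 0) : v = 0 := by
  have hvs : v ∈ Submodule.span ℚ (Set.range (genV Sset q)) := by
    rw [span_genV]; trivial
  obtain ⟨c, rfl⟩ := Finsupp.mem_span_range_iff_exists_finsupp.mp hvs
  have hcoeff : ∀ p₀ : ↥(Hsub Sset q) × ↥Sset,
      (((p₀.1 : G)), ((p₀.2 : Fin n))) ∉ Triv Sset q → c p₀ = 0 := by
    intro p₀ hp₀
    set FF : (ℚ ⊗[ℤ] Additive (Abelianization ↥(q.ker ⊓ Asub Sset))) →ₗ[ℚ] ℚ :=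
      (coord (↑p₀.2) (↑p₀.1)).comp ((φV q).comp
        (inclMap (inf_le_left : q.ker ⊓ Asub Sset ≤ q.ker))) with hFFdef
    have hFF : ∀ p : ↥(Hsub Sset q) × ↥Sset,
        FF (genV Sset q p) = if p = p₀ then 1 else 0 := by
      intro p
      have h1 : FF (genV Sset q p) = coord (↑p₀.2) (↑p₀.1) (dd q (schr Sset q p.1 p.2.2)) := by
        rw [hFFdef]
        show coord _ _ (φV q (inclMap _ (genV Sset q p))) = _
        rw [genV, φV_incl, one_smul]
      rw [h1, dd_schr, map_sub, map_add,
        coord_Dspan Sset q _ _ hp₀ _ (dd_STrans_mem_Dspan Sset q p.1),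
        coord_Dspan Sset q _ _ hp₀ _ (dd_STrans_mem_Dspan Sset q _), zero_add, sub_zero]
      rcases eq_or_ne p p₀ with rfl | hne
      · rw [if_pos rfl, coord_Bv_self]
      · rw [if_neg hne]
        refine coord_Bv_ne _ _ _ _ ?_
        intro hc
        apply hne
        have h2 : ((p.1 : G)) = ((p₀.1 : G)) ∧ ((p.2 : Fin n)) = ((p₀.2 : Fin n)) := by
          constructor
          · exact congrArg Prod.fst hc
          · exact congrArg Prod.snd hc
        exact Prod.ext (Subtype.ext h2.1) (Subtype.ext h2.2)
    have h0 : FF (c.sum fun p r => r • genV Sset q p) = 0 := by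
      rw [hFFdef]
      show coord _ _ (φV q (inclMap _ _)) = 0
      rw [hv, map_zero]
    rw [map_finsuppSum] at h0
    simp only [map_smul, hFF, smul_eq_mul, mul_ite, mul_one, mul_zero] at h0
    rw [Finsupp.sum_ite_eq' c p₀ (fun _ r => r)] at h0
    by_cases hps : p₀ ∈ c.support
    · rwa [if_pos hps] at h0
    · exact Finsupp.notMem_support_iff.mp hps
  rw [Finsupp.sum]
  apply Finset.sum_eq_zero
  intro p hp
  by_cases ht : (((p.1 : G)), ((p.2 : Fin n))) ∈ Triv Sset q
  · have h1 : genV Sset q p = 0 := by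
      rw [genV]
      have h2 : (⟨schr Sset q p.1 p.2.2, schr_mem Sset q p.1 p.2.2⟩ :
          ↥(q.ker ⊓ Asub Sset)) = 1 := Subtype.ext (schr_triv Sset q p ht)
      rw [h2, map_one, ofMul_one, tmul_zero]
    rw [h1, smul_zero]
  · rw [hcoeff p ht, zero_smul]

end Inj

section Supp
variable {n : ℕ} {G : Type} [Group G] (Sset : Set (Fin n)) (q : FreeGroup (Fin n) →* G)

attribute [local instance] Classical.propDecidable

/-- The submodule of `ℚ[G]^n` of vectors all of whose coordinates are supported in `T`. -/
noncomputable def NT (T : Set G) : Submodule ℚ (MM n G) where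
  carrier := {x | ∀ c, ((x c).coeff.support : Set G) ⊆ T}
  add_mem' := by
    intro a b ha hb c g hg
    have h1 : g ∈ (a c).coeff.support ∪ (b c).coeff.support := Finsupp.support_add hg
    rcases Finset.mem_union.mp h1 with h | h
    · exact ha c h
    · exact hb c h
  zero_mem' := by
    intro c g hg
    simp at hg
  smul_mem' := by
    intro r x hx c g hg
    exact hx c (Finsupp.support_smul hg)

lemma mem_NT {T : Set G} {x : MM n G} : x ∈ NT T ↔ ∀ c, ((x c).coeff.support : Set G) ⊆ T :=
  Iff.rfl

lemma NT_mono {T T' : Set G} (h : T ⊆ T') : (NT T : Submodule ℚ (MM n G)) ≤ NT T' :=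
  fun _ hx c => (hx c).trans h

lemma gmul_mem_NT (g : G) {T : Set G} {x : MM n G} (hx : x ∈ NT T) :
    gmul g x ∈ NT ((g * ·) '' T) := by
  intro c g' hg'
  have h1 := MonoidAlgebra.support_coeff_single_mul_subset (x c) (1 : ℚ) g hg'
  obtain ⟨a, ha, rfl⟩ := Finset.mem_image.mp h1
  exact ⟨a, hx c ha, rfl⟩

lemma mul_image_subset {Hs : Subgroup G} {g : G} (hg : g ∈ Hs) :
    (g * ·) '' (Hs : Set G) ⊆ (Hs : Set G) := by
  rintro _ ⟨a, ha, rfl⟩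
  exact mul_mem hg ha

lemma dd_mem_NT (y : FreeGroup (Fin n)) (hy : y ∈ Asub Sset) :
    dd q y ∈ NT ((Hsub Sset q : Subgroup G) : Set G) := by
  induction hy using Subgroup.closure_induction with
  | mem x hx =>
    obtain ⟨i, hi, rfl⟩ := hx
    rw [dd_of]
    intro c g hg
    rcases eq_or_ne c i with rfl | hc
    · rw [Pi.single_eq_same] at hg
      have h1 : g ∈ ((1 : MonoidAlgebra ℚ G)).coeff.support := hg
      rw [MonoidAlgebra.one_def, MonoidAlgebra.coeff_single] at h1
      have h2 := Finsupp.support_single_subset h1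
      rw [Finset.mem_singleton] at h2
      rw [h2]
      exact one_mem _
    · rw [Pi.single_eq_of_ne hc] at hg
      simp at hg
  | one =>
    rw [dd_one]
    intro c g hg
    simp at hg
  | mul x y hx hy ihx ihy =>
    rw [dd_mul]
    refine add_mem ihx ?_
    exact NT_mono (mul_image_subset (Hs := Hsub Sset q) (Subgroup.mem_map_of_mem q hx))
      (gmul_mem_NT (q x) ihy)
  | inv x hx ihx =>
    rw [dd_inv]
    refine neg_mem ?_
    exact NT_mono (mul_image_subset (Hs := Hsub Sset q) (inv_mem (Subgroup.mem_map_of_mem q hx)))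
      (gmul_mem_NT (q x)⁻¹ ihx)

lemma φV_inclMap_mem_NT (u : ℚ ⊗[ℤ] Additive (Abelianization ↥(q.ker ⊓ Asub Sset))) :
    φV q (inclMap (inf_le_left : q.ker ⊓ Asub Sset ≤ q.ker) u) ∈
      NT ((Hsub Sset q : Subgroup G) : Set G) := by
  induction u using TensorProduct.induction_on with
  | zero => rw [map_zero, map_zero]; exact zero_mem _
  | add x y ihx ihy => rw [map_add, map_add]; exact add_mem ihx ihy
  | tmul c x =>
    obtain ⟨k, rfl⟩ : ∃ k, Additive.ofMul (Abelianization.of k) = x := by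
      obtain ⟨k, hk⟩ := abOf_surjective (Additive.toMul x)
      exact ⟨k, congrArg Additive.ofMul hk⟩
    rw [φV_incl]
    exact Submodule.smul_mem _ _ (dd_mem_NT Sset q k.1 (Subgroup.mem_inf.mp k.2).2)

end Supp

/-- Claim 2.4 in Step 4 of the proof of Theorem 1.1, in group-theoretic form. Let `n ≥ 2`,
`q : Fₙ → G` a surjection onto a finite group, `K = ker q`, `A` the subgroup generated by
all the generators except `a₀`, and `K₀ = K ⊓ A`. Then the map
`ι : ℚ ⊗ K₀ᵃᵇ → ℚ ⊗ Kᵃᵇ` induced by inclusion is injective, and for any elements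
`w₁, …, w_m` of `Fₙ` whose images under `q` represent the distinct left cosets of `q(A)`
in `G`, the conjugation translates `c_{w_i}(range ι)` form an independent family of
subspaces of `V = ℚ ⊗ Kᵃᵇ`. -/
theorem translates_of_subcover_homology_independent (n : ℕ) (hn : 2 ≤ n)
    (G : Type) [Group G] [Finite G]
    (q : FreeGroup (Fin n) →* G) (hq : Function.Surjective q)
    (A : Subgroup (FreeGroup (Fin n)))
    (hA : A = Subgroup.closure (FreeGroup.of '' {i : Fin n | i ≠ ⟨0, by omega⟩})) :
    Function.Injective (inclMap (inf_le_left : q.ker ⊓ A ≤ q.ker)) ∧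
    ∀ (m : ℕ) (w : Fin m → FreeGroup (Fin n)),
      Function.Bijective
        (fun i : Fin m => (QuotientGroup.mk (q (w i)) : G ⧸ Subgroup.map q A)) →
      iSupIndep (fun i : Fin m =>
        Submodule.map (conjMap q.ker (w i))
          (LinearMap.range (inclMap (inf_le_left : q.ker ⊓ A ≤ q.ker)))) := by
  have hA' : A = Asub {i : Fin n | i ≠ ⟨0, by omega⟩} := hA
  subst hA'
  set Sset : Set (Fin n) := {i : Fin n | i ≠ ⟨0, by omega⟩} with hS
  constructor
  · -- injectivity of the inclusion map
    intro a b hab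
    have h0 : φV q (inclMap (inf_le_left : q.ker ⊓ Asub Sset ≤ q.ker) (a - b)) = 0 := by
      rw [map_sub, map_sub, hab, sub_self]
    exact sub_eq_zero.mp (psi_inj Sset q (a - b) h0)
  · intro m w hbij
    rw [iSupIndep_def]
    intro i
    rw [Submodule.disjoint_def]
    intro x hxi hxs
    obtain ⟨y, hy, rfl⟩ := hxi
    obtain ⟨u, rfl⟩ := hy
    -- disjointness of cosets
    have hdisj : ∀ j, j ≠ i → ∀ g : G, g ∈ (q (w i) * ·) '' ↑(Hsub Sset q) →
        g ∈ (q (w j) * ·) '' ↑(Hsub Sset q) → False := by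
      rintro j hj g ⟨h1, hh1, he1⟩ ⟨h2, hh2, he2⟩
      have heq : (QuotientGroup.mk (q (w i)) : G ⧸ Subgroup.map q (Asub Sset)) =
          QuotientGroup.mk (q (w j)) := by
        rw [QuotientGroup.eq]
        have he1' : q (w i) * h1 = g := he1
        have he2' : q (w j) * h2 = g := he2
        have hg : (q (w i))⁻¹ * q (w j) = h1 * h2⁻¹ := by
          have heg : q (w i) * h1 = q (w j) * h2 := by rw [he1', he2']
          have := congrArg (fun z => (q (w i))⁻¹ * z * h2⁻¹) heg
          simpa [mul_assoc] using this.symm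
        rw [hg]
        exact mul_mem hh1 (inv_mem hh2)
      exact hj (hbij.injective heq).symm
    -- the image under φV lies in the coset-supported submodule
    have hmem1 : φV q (conjMap q.ker (w i)
        (inclMap (inf_le_left : q.ker ⊓ Asub Sset ≤ q.ker) u)) ∈
        NT ((q (w i) * ·) '' ↑(Hsub Sset q)) := by
      rw [φV_conj]
      exact gmul_mem_NT _ (φV_inclMap_mem_NT Sset q u)
    have hsup : (⨆ j, ⨆ (_ : j ≠ i), (Submodule.map (conjMap q.ker (w j))
          (LinearMap.range (inclMap (inf_le_left : q.ker ⊓ Asub Sset ≤ q.ker))))) ≤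
        Submodule.comap (φV q)
          (NT (⋃ j ∈ {j : Fin m | j ≠ i}, (q (w j) * ·) '' ↑(Hsub Sset q))) := by
      refine iSup_le fun j => iSup_le fun hj => ?_
      rintro z hz
      obtain ⟨y, hy, rfl⟩ := hz
      obtain ⟨u', rfl⟩ := hy
      rw [Submodule.mem_comap, φV_conj]
      refine NT_mono ?_ (gmul_mem_NT _ (φV_inclMap_mem_NT Sset q u'))
      exact Set.subset_biUnion_of_mem (s := {j : Fin m | j ≠ i})
        (u := fun j => (q (w j) * ·) '' ((Hsub Sset q : Subgroup G) : Set G)) hj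
    have hmem2 := hsup hxs
    have hzero : φV q (conjMap q.ker (w i)
        (inclMap (inf_le_left : q.ker ⊓ Asub Sset ≤ q.ker) u)) = 0 := by
      funext cc
      rw [Pi.zero_apply]
      rw [← MonoidAlgebra.coeff_eq_zero]
      apply Finsupp.support_eq_empty.mp
      rw [Finset.eq_empty_iff_forall_notMem]
      intro g hg
      have h1 := hmem1 cc hg
      have h2 := hmem2 cc hg
      obtain ⟨j, hj, hgj⟩ := Set.mem_iUnion₂.mp h2
      exact hdisj j hj g h1 hgj
    -- conclude
    rw [φV_conj] at hzero
    have h3 : φV q (inclMap (inf_le_left : q.ker ⊓ Asub Sset ≤ q.ker) u) = 0 := by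
      have := congrArg (gmul (q (w i))⁻¹) hzero
      rw [gmul_gmul, inv_mul_cancel, gmul_one_apply] at this
      rw [this]
      funext c
      simp [gmul]
    rw [psi_inj Sset q u h3, map_zero, map_zero]
end

section
/- Let q : FreeGroup (Fin 2) →* Multiplicative (ZMod 2 × ZMod 2) be the homomorphism sending the generator a to (1,0) and the generator b to (0,1) (the mod-2 abelianization map), with kernel K. Then the commutator c = a * b * a⁻¹ * b⁻¹ lies in K, and its class [c] = 1 ⊗ (Abelianization.of c) in V := ℚ ⊗[ℤ] Additive (Abelianization K) is nonzero. -/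
open TensorProduct

namespace ModTwoCoverAux

abbrev D := Multiplicative (ZMod 2 × ZMod 2)
abbrev N := (ZMod 2 × ZMod 2) → Multiplicative ℤ

def act : D →* MulAut N where
  toFun d :=
    { toFun := fun f x => f (x + d.toAdd)
      invFun := fun f x => f (x - d.toAdd)
      left_inv := fun f => by funext x; simp
      right_inv := fun f => by funext x; simp
      map_mul' := fun f g => rfl }
  map_one' := by ext f x; simp
  map_mul' := fun d e => by
    ext f x
    show f (x + (d.toAdd + e.toAdd)) = f (x + d.toAdd + e.toAdd)
    rw [add_assoc]

def delta : N := fun x => if x = 0 then Multiplicative.ofAdd 1 else 1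

def gen : Fin 2 → N ⋊[act] D :=
  ![⟨delta, Multiplicative.ofAdd (1, 0)⟩, ⟨delta, Multiplicative.ofAdd (0, 1)⟩]

def h : FreeGroup (Fin 2) →* N ⋊[act] D := FreeGroup.lift gen

lemma h_of (i : Fin 2) : h (FreeGroup.of i) = gen i := FreeGroup.lift_apply_of

lemma hc_right :
    (h (FreeGroup.of 0 * FreeGroup.of 1 * (FreeGroup.of 0)⁻¹ * (FreeGroup.of 1)⁻¹)).right
      = 1 := by
  simp only [map_mul, map_inv, h_of]
  decide

lemma hc_left :
    ((h (FreeGroup.of 0 * FreeGroup.of 1 * (FreeGroup.of 0)⁻¹ * (FreeGroup.of 1)⁻¹)).left) (1, 0)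
      = Multiplicative.ofAdd (1 : ℤ) := by
  simp only [map_mul, map_inv, h_of]
  decide

lemma right_eq (q : FreeGroup (Fin 2) →* D)
    (hqa : q (FreeGroup.of 0) = Multiplicative.ofAdd ((1, 0) : ZMod 2 × ZMod 2))
    (hqb : q (FreeGroup.of 1) = Multiplicative.ofAdd ((0, 1) : ZMod 2 × ZMod 2))
    (x : FreeGroup (Fin 2)) : (h x).right = q x := by
  have h1 : (SemidirectProduct.rightHom.comp h : FreeGroup (Fin 2) →* D) = q := by
    apply FreeGroup.ext_hom
    intro i
    fin_cases i <;> simp [h_of, gen, hqa, hqb]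
  calc (h x).right = (SemidirectProduct.rightHom.comp h) x := rfl
    _ = q x := by rw [h1]

def toZ (q : FreeGroup (Fin 2) →* D) (hq : ∀ k : q.ker, (h k.1).right = 1) :
    q.ker →* Multiplicative ℤ where
  toFun k := ((h k.1).left) (1, 0)
  map_one' := by simp [OneMemClass.coe_one]
  map_mul' k k' := by
    have : (h (k * k').1).left = (h k.1).left * act (h k.1).right (h k'.1).left := by
      show (h (k.1 * k'.1)).left = _
      rw [map_mul]; simp
    show ((h (k * k').1).left) (1, 0) = _
    rw [this, hq k, map_one]
    simp [Pi.mul_apply]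

end ModTwoCoverAux

open ModTwoCoverAux in
/-- Section 3.1: for the mod-2 homology cover of the wedge of two circles — i.e. the
kernel `K` of the map `q : F₂ → ℤ/2 × ℤ/2` sending the generators `a, b` to `(1,0)` and
`(0,1)` — the commutator `c = a b a⁻¹ b⁻¹` lies in `K` and its class in
`V = ℚ ⊗[ℤ] Kᵃᵇ` is nonzero. -/
theorem commutator_class_nonzero_in_mod_two_cover
    (q : FreeGroup (Fin 2) →* Multiplicative (ZMod 2 × ZMod 2))
    (hqa : q (FreeGroup.of 0) = Multiplicative.ofAdd ((1, 0) : ZMod 2 × ZMod 2))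
    (hqb : q (FreeGroup.of 1) = Multiplicative.ofAdd ((0, 1) : ZMod 2 × ZMod 2)) :
    ∃ hc : FreeGroup.of 0 * FreeGroup.of 1 * (FreeGroup.of 0)⁻¹ * (FreeGroup.of 1)⁻¹ ∈
        q.ker,
      (1 : ℚ) ⊗ₜ[ℤ] Additive.ofMul (Abelianization.of
        (⟨FreeGroup.of 0 * FreeGroup.of 1 * (FreeGroup.of 0)⁻¹ * (FreeGroup.of 1)⁻¹, hc⟩ :
          q.ker)) ≠ (0 : ℚ ⊗[ℤ] Additive (Abelianization q.ker)) := by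
  have hc : FreeGroup.of 0 * FreeGroup.of 1 * (FreeGroup.of 0)⁻¹ * (FreeGroup.of 1)⁻¹ ∈
      q.ker := by
    rw [MonoidHom.mem_ker]
    simp only [map_mul, map_inv, hqa, hqb]
    decide
  refine ⟨hc, ?_⟩
  have hq : ∀ k : q.ker, (h k.1).right = 1 := fun k => by
    rw [right_eq q hqa hqb]; exact k.2
  set c : q.ker := ⟨_, hc⟩ with hcdef
  have key : toZ q hq c = Multiplicative.ofAdd (1 : ℤ) := hc_left
  set ψ : Abelianization q.ker →* Multiplicative ℤ := Abelianization.lift (toZ q hq) with hψ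
  set f : Additive (Abelianization q.ker) →+ ℤ := MonoidHom.toAdditive ψ with hf
  set L : Additive (Abelianization q.ker) →ₗ[ℤ] ℚ :=
    ((Int.castRingHom ℚ).toAddMonoidHom.comp f).toIntLinearMap with hLdef
  set F : (ℚ ⊗[ℤ] Additive (Abelianization q.ker)) →ₗ[ℤ] ℚ :=
    (LinearMap.mul' ℤ ℚ).comp (LinearMap.lTensor ℚ L) with hF
  intro h0
  have hh := congrArg F h0
  rw [map_zero, hF] at hh
  change LinearMap.mul' ℤ ℚ (LinearMap.lTensor ℚ L (1 ⊗ₜ[ℤ] Additive.ofMul (Abelianization.of c))) = 0 at hh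
  rw [LinearMap.lTensor_tmul, LinearMap.mul'_apply] at hh
  have hL : L (Additive.ofMul (Abelianization.of c)) = 1 := by
    show ((Multiplicative.toAdd (ψ (Abelianization.of c)) : ℤ) : ℚ) = 1
    rw [show ψ (Abelianization.of c) = Multiplicative.ofAdd (1 : ℤ) from
      (Abelianization.lift_apply_of (f := toZ q hq) (x := c)).trans key]
    norm_num
  rw [hL] at hh
  norm_num at hh
end

section
/- Let q : FreeGroup (Fin 2) →* Multiplicative (ZMod 2 × ZMod 2) be the homomorphism sending the generator a to (1,0) and the generator b to (0,1), with kernel K, and set V := ℚ ⊗[ℤ] Additive (Abelianization K). Let w = a³ * b⁻¹ * a * b. Then w ∈ K, and the four classes [w], [a w a⁻¹], [b w b⁻¹], [(a*b) w (a*b)⁻¹] are linearly independent in V, where [k] denotes 1 ⊗ (Abelianization.of k) for k ∈ K. -/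
open TensorProduct

abbrev MGrp := Multiplicative (ZMod 2 × ZMod 2)
abbrev AFun := (ZMod 2 × ZMod 2) → ℤ × ℤ
abbrev NGrp := Multiplicative AFun

def shiftAut (g : ZMod 2 × ZMod 2) : NGrp ≃* NGrp where
  toFun f := Multiplicative.ofAdd (fun x => f.toAdd (x + g))
  invFun f := Multiplicative.ofAdd (fun x => f.toAdd (x - g))
  left_inv f := funext fun x => by simp
  right_inv f := funext fun x => by simp
  map_mul' f f' := rfl

def shiftHom : MGrp →* MulAut NGrp where
  toFun g := shiftAut g.toAdd
  map_one' := by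
    ext f : 1
    exact funext fun x => by simp [shiftAut]
  map_mul' g h := by
    ext f : 1
    exact funext fun x => show Multiplicative.toAdd f (x + (Multiplicative.toAdd g + Multiplicative.toAdd h)) = Multiplicative.toAdd f ((x + Multiplicative.toAdd g) + Multiplicative.toAdd h) by rw [add_assoc]

abbrev Wr := SemidirectProduct NGrp MGrp shiftHom

instance : DecidableEq Wr := fun x y =>
  decidable_of_iff (x.left = y.left ∧ x.right = y.right)
    (by cases x; cases y; simp [SemidirectProduct.ext_iff])

def delta (v : ℤ × ℤ) : AFun := fun x => if x = 0 then v else 0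

def av : Wr := ⟨Multiplicative.ofAdd (delta (1, 0)), Multiplicative.ofAdd (1, 0)⟩
def bv : Wr := ⟨Multiplicative.ofAdd (delta (0, 1)), Multiplicative.ofAdd (0, 1)⟩

def psi : FreeGroup (Fin 2) →* Wr := FreeGroup.lift ![av, bv]

def rho (q : FreeGroup (Fin 2) →* MGrp) (h : ∀ x ∈ q.ker, (psi x).right = 1) :
    q.ker →* NGrp where
  toFun k := (psi (k : FreeGroup (Fin 2))).left
  map_one' := by simp
  map_mul' x y := by
    have hx : (psi (x : FreeGroup (Fin 2))).right = 1 := h x x.2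
    show (psi ((x : FreeGroup (Fin 2)) * (y : FreeGroup (Fin 2)))).left = _
    rw [map_mul, SemidirectProduct.mul_left, hx, map_one, MulAut.one_apply]

def toQ (q : FreeGroup (Fin 2) →* MGrp) (h : ∀ x ∈ q.ker, (psi x).right = 1) :
    Additive (Abelianization q.ker) →+ ((ZMod 2 × ZMod 2) → ℚ × ℚ) where
  toFun x := fun g =>
    (((((Abelianization.lift (rho q h)) x.toMul).toAdd g).1 : ℚ),
     ((((Abelianization.lift (rho q h)) x.toMul).toAdd g).2 : ℚ))
  map_zero' := by
    funext g
    simp [toMul_zero]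
  map_add' x y := by
    funext g
    simp only [toMul_add, map_mul, toAdd_mul, Pi.add_apply, Prod.fst_add, Prod.snd_add,
      Int.cast_add, Pi.add_apply, Prod.mk_add_mk]

def tv4 (p q r s : ℤ × ℤ) : AFun := fun x =>
  if x.1 = 0 then (if x.2 = 0 then p else q) else (if x.2 = 0 then r else s)

def tvs : Fin 4 → AFun :=
  ![tv4 (2,0) (0,1) (1,0) (1,-1),
    tv4 (1,0) (1,-1) (2,0) (0,1),
    tv4 (0,1) (2,0) (1,-1) (1,0),
    tv4 (1,-1) (1,0) (0,1) (2,0)]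

def wW : Wr := av ^ 3 * bv⁻¹ * av * bv

def ufam : Fin 4 → Wr := ![wW, av * wW * av⁻¹, bv * wW * bv⁻¹, (av * bv) * wW * (av * bv)⁻¹]

theorem hufam : ∀ i, (ufam i).left.toAdd = tvs i := by decide

theorem hufamr : ∀ i, (ufam i).right = 1 := by decide

theorem indep_tvs :
    LinearIndependent ℚ (fun i : Fin 4 => fun g : ZMod 2 × ZMod 2 =>
      (((tvs i g).1 : ℚ), ((tvs i g).2 : ℚ))) := by
  rw [Fintype.linearIndependent_iff]
  intro c hc
  have h1 := congrArg Prod.fst (congrFun hc ((0 : ZMod 2), (0 : ZMod 2)))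
  have h2 := congrArg Prod.fst (congrFun hc ((0 : ZMod 2), (1 : ZMod 2)))
  have h3 := congrArg Prod.snd (congrFun hc ((0 : ZMod 2), (1 : ZMod 2)))
  have h4 := congrArg Prod.snd (congrFun hc ((0 : ZMod 2), (0 : ZMod 2)))
  simp only [Fin.sum_univ_four, tvs, tv4, Matrix.cons_val_zero, Matrix.cons_val_one,
    Matrix.head_cons, Matrix.cons_val_two, Matrix.tail_cons, Matrix.cons_val_three,
    Pi.add_apply, Pi.smul_apply, Prod.smul_mk, smul_eq_mul, Prod.fst_add, Prod.snd_add,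
    if_true, eq_self_iff_true, one_ne_zero, if_false, Pi.zero_apply, Prod.fst_zero,
    Prod.snd_zero, Int.cast_ofNat, Int.cast_one, Int.cast_zero, Int.cast_neg,
    Int.cast_two] at h1 h2 h3 h4
  norm_num at h1 h2 h3 h4
  have e0 : c 0 = 0 := by linarith
  have e1 : c 1 = 0 := by linarith
  have e2 : c 2 = 0 := by linarith
  have e3 : c 3 = 0 := by linarith
  intro i
  fin_cases i
  exacts [e0, e1, e2, e3]

example : True := trivial

/-- Section 3.1: for the mod-2 homology cover of the wedge of two circles — the kernel
`K` of the map `q : F₂ → ℤ/2 × ℤ/2` sending the generators `a, b` to `(1,0)` and `(0,1)`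
— the element `w = a³ b⁻¹ a b` lies in `K`, and the classes in `V = ℚ ⊗[ℤ] Kᵃᵇ` of
`w, a w a⁻¹, b w b⁻¹, (ab) w (ab)⁻¹` are linearly independent (the `G`-orbit of the class
of `w` spans a copy of the regular representation `ℚ[G]`). -/
theorem regular_orbit_in_mod_two_cover
    (q : FreeGroup (Fin 2) →* Multiplicative (ZMod 2 × ZMod 2))
    (hqa : q (FreeGroup.of 0) = Multiplicative.ofAdd ((1, 0) : ZMod 2 × ZMod 2))
    (hqb : q (FreeGroup.of 1) = Multiplicative.ofAdd ((0, 1) : ZMod 2 × ZMod 2)) :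
    ∃ hw : (FreeGroup.of 0) ^ 3 * (FreeGroup.of 1)⁻¹ * FreeGroup.of 0 * FreeGroup.of 1 ∈
        q.ker,
      LinearIndependent ℚ
        ![(1 : ℚ) ⊗ₜ[ℤ] Additive.ofMul (Abelianization.of
            (⟨(FreeGroup.of 0) ^ 3 * (FreeGroup.of 1)⁻¹ * FreeGroup.of 0 * FreeGroup.of 1,
              hw⟩ : q.ker)),
          (1 : ℚ) ⊗ₜ[ℤ] Additive.ofMul (Abelianization.of
            (⟨FreeGroup.of 0 *
                ((FreeGroup.of 0) ^ 3 * (FreeGroup.of 1)⁻¹ * FreeGroup.of 0 * FreeGroup.of 1) *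
                (FreeGroup.of 0)⁻¹,
              (inferInstance : q.ker.Normal).conj_mem _ hw _⟩ : q.ker)),
          (1 : ℚ) ⊗ₜ[ℤ] Additive.ofMul (Abelianization.of
            (⟨FreeGroup.of 1 *
                ((FreeGroup.of 0) ^ 3 * (FreeGroup.of 1)⁻¹ * FreeGroup.of 0 * FreeGroup.of 1) *
                (FreeGroup.of 1)⁻¹,
              (inferInstance : q.ker.Normal).conj_mem _ hw _⟩ : q.ker)),
          (1 : ℚ) ⊗ₜ[ℤ] Additive.ofMul (Abelianization.of
            (⟨(FreeGroup.of 0 * FreeGroup.of 1) *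
                ((FreeGroup.of 0) ^ 3 * (FreeGroup.of 1)⁻¹ * FreeGroup.of 0 * FreeGroup.of 1) *
                (FreeGroup.of 0 * FreeGroup.of 1)⁻¹,
              (inferInstance : q.ker.Normal).conj_mem _ hw _⟩ : q.ker))] := by
  have hq : ∀ x, q x = (psi x).right := by
    have h : q = SemidirectProduct.rightHom.comp psi := by
      apply FreeGroup.ext_hom
      intro i
      fin_cases i
      · simpa [psi, av] using hqa
      · simpa [psi, bv] using hqb
    intro x; rw [h]; rfl
  have hker : ∀ x ∈ q.ker, (psi x).right = 1 := fun x hx => by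
    rw [← hq]; exact hx
  have hk0 : psi ((FreeGroup.of 0) ^ 3 * (FreeGroup.of 1)⁻¹ * FreeGroup.of 0 * FreeGroup.of 1)
      = wW := by
    simp [psi, wW]
  have hw0 : (FreeGroup.of 0) ^ 3 * (FreeGroup.of 1)⁻¹ * FreeGroup.of 0 * FreeGroup.of 1 ∈
      q.ker := by
    rw [MonoidHom.mem_ker, hq, hk0]
    exact hufamr 0
  refine ⟨hw0, ?_⟩
  have hk1 : psi (FreeGroup.of 0 *
      ((FreeGroup.of 0) ^ 3 * (FreeGroup.of 1)⁻¹ * FreeGroup.of 0 * FreeGroup.of 1) *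
      (FreeGroup.of 0)⁻¹) = ufam 1 := by
    show _ = av * wW * av⁻¹
    simp [psi, wW]
  have hk2 : psi (FreeGroup.of 1 *
      ((FreeGroup.of 0) ^ 3 * (FreeGroup.of 1)⁻¹ * FreeGroup.of 0 * FreeGroup.of 1) *
      (FreeGroup.of 1)⁻¹) = ufam 2 := by
    show _ = bv * wW * bv⁻¹
    simp [psi, wW]
  have hk3 : psi ((FreeGroup.of 0 * FreeGroup.of 1) *
      ((FreeGroup.of 0) ^ 3 * (FreeGroup.of 1)⁻¹ * FreeGroup.of 0 * FreeGroup.of 1) *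
      (FreeGroup.of 0 * FreeGroup.of 1)⁻¹) = ufam 3 := by
    show _ = (av * bv) * wW * (av * bv)⁻¹
    simp [psi, wW]
  apply LinearIndependent.of_comp ((toQ q hker).toIntLinearMap.liftBaseChange ℚ)
  convert indep_tvs using 1
  funext i
  fin_cases i <;>
  · beta_reduce
    simp only [Function.comp_apply, Fin.zero_eta, Fin.mk_one, Fin.reduceFinMk,
      Matrix.cons_val_zero, Matrix.cons_val_one, Matrix.head_cons,
      Matrix.cons_val_two, Matrix.tail_cons, Matrix.cons_val_three]
    rw [LinearMap.liftBaseChange_tmul, one_smul]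
    show (toQ q hker) _ = _
    funext g
    simp only [toQ, AddMonoidHom.coe_mk, ZeroHom.coe_mk, toMul_ofMul, Abelianization.lift_apply_of]
    rw [show (rho q hker) _ = (psi _).left from rfl]
    first
      | (rw [hk0, show wW = ufam 0 from rfl, hufam 0])
      | (rw [hk1, hufam 1])
      | (rw [hk2, hufam 2])
      | (rw [hk3, hufam 3])
  all_goals rfl
end

section
/- Let n ≥ 1, let G be a finite group, q : Fₙ →* G a surjective homomorphism with kernel K, and V := ℚ ⊗[ℤ] Additive (Abelianization K). Let w ∈ Fₙ be an element such that q(w) has order k ≥ 2 in G. Then w^k ∈ K, and the set of classes {[u * w^k * u⁻¹] : u ∈ Fₙ} ⊆ V has cardinality at most |G| / k; in particular it has strictly fewer than |G| elements, and its ℚ-linear span has dimension strictly less than |G|. -/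
open TensorProduct

/-- Key: the class of `u w^k u⁻¹` in `Kᵃᵇ` only depends on `q u` mod `⟨q w⟩`. -/
theorem elevation_class_eq {n : ℕ} {G : Type} [Group G]
    (q : FreeGroup (Fin n) →* G) (w : FreeGroup (Fin n)) (k : ℕ)
    (hwk : w ^ k ∈ q.ker) (u₁ u₂ : FreeGroup (Fin n))
    (h : (q u₂)⁻¹ * q u₁ ∈ Subgroup.zpowers (q w)) :
    Abelianization.of
        (⟨u₁ * w ^ k * u₁⁻¹, (inferInstance : q.ker.Normal).conj_mem _ hwk u₁⟩ : q.ker) =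
      Abelianization.of
        (⟨u₂ * w ^ k * u₂⁻¹, (inferInstance : q.ker.Normal).conj_mem _ hwk u₂⟩ : q.ker) := by
  obtain ⟨m, hm⟩ := h
  set t : FreeGroup (Fin n) := u₂⁻¹ * u₁ * w ^ (-m) with ht
  have hqw : q w ^ k = 1 := by
    have : q (w ^ k) = 1 := hwk
    simpa using this
  have htK : t ∈ q.ker := by
    have : q t = (q u₂)⁻¹ * q u₁ * (q w) ^ (-m) := by simp [ht]
    rw [MonoidHom.mem_ker, this, ← hm]
    group
  have hu₁ : u₁ = u₂ * t * w ^ m := by rw [ht]; group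
  have e1 : (⟨u₁ * w ^ k * u₁⁻¹, (inferInstance : q.ker.Normal).conj_mem _ hwk u₁⟩ : q.ker) =
      (MulAut.conjNormal u₂) ((⟨t, htK⟩ : q.ker) * ⟨w ^ k, hwk⟩ * (⟨t, htK⟩ : q.ker)⁻¹) := by
    ext
    push_cast [MulAut.conjNormal_apply]
    rw [hu₁]
    group
  have e2 : (⟨u₂ * w ^ k * u₂⁻¹, (inferInstance : q.ker.Normal).conj_mem _ hwk u₂⟩ : q.ker) =
      (MulAut.conjNormal u₂) ⟨w ^ k, hwk⟩ := by
    ext; simp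
  rw [e1, e2, map_mul, map_mul, map_inv, map_mul, map_mul, map_inv]
  exact mul_inv_cancel_comm _ _

/-- The core of the proof of Lemma 3.2. Let `q : Fₙ → G` be a surjection onto a finite
group with kernel `K`, and suppose `q w` has order `k ≥ 2` in `G`. Then `w^k ∈ K`, and
the set of homology classes `[u w^k u⁻¹]` of the elevations of `w` (for `u ∈ Fₙ`) has at
most `|G| / k` elements; in particular it has fewer than `|G|` elements, and its `ℚ`-span
in `V = ℚ ⊗[ℤ] Kᵃᵇ` has dimension less than `|G|`. -/
theorem elevation_classes_card_lt (n : ℕ) (hn : 1 ≤ n) (G : Type) [Group G] [Fintype G]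
    (q : FreeGroup (Fin n) →* G) (hq : Function.Surjective q)
    (w : FreeGroup (Fin n)) (k : ℕ) (hk2 : 2 ≤ k) (hord : orderOf (q w) = k) :
    ∃ hwk : w ^ k ∈ q.ker,
      let S : Set (ℚ ⊗[ℤ] Additive (Abelianization q.ker)) :=
        {x | ∃ u : FreeGroup (Fin n),
          x = (1 : ℚ) ⊗ₜ[ℤ] Additive.ofMul (Abelianization.of
            (⟨u * w ^ k * u⁻¹, (inferInstance : q.ker.Normal).conj_mem _ hwk u⟩ : q.ker))}
      S.Finite ∧ S.ncard ≤ Fintype.card G / k ∧ S.ncard < Fintype.card G ∧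
        Module.finrank ℚ ↥(Submodule.span ℚ S) < Fintype.card G := by
  have hwk : w ^ k ∈ q.ker := by
    rw [MonoidHom.mem_ker, map_pow, ← hord, pow_orderOf_eq_one]
  refine ⟨hwk, ?_⟩
  intro S
  -- the quotient of `G` by the cyclic subgroup generated by `q w`
  set H := Subgroup.zpowers (q w) with hH
  set Q := G ⧸ H with hQ
  -- the map sending a coset to the associated elevation class
  have key : ∀ u₁ u₂ : FreeGroup (Fin n), (q u₂)⁻¹ * q u₁ ∈ H →
      ((1 : ℚ) ⊗ₜ[ℤ] Additive.ofMul (Abelianization.of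
        (⟨u₁ * w ^ k * u₁⁻¹, (inferInstance : q.ker.Normal).conj_mem _ hwk u₁⟩ : q.ker))
        : ℚ ⊗[ℤ] Additive (Abelianization q.ker)) =
      (1 : ℚ) ⊗ₜ[ℤ] Additive.ofMul (Abelianization.of
        (⟨u₂ * w ^ k * u₂⁻¹, (inferInstance : q.ker.Normal).conj_mem _ hwk u₂⟩ : q.ker)) := by
    intro u₁ u₂ h
    rw [elevation_class_eq q w k hwk u₁ u₂ h]
  let ψ : G → ℚ ⊗[ℤ] Additive (Abelianization q.ker) := fun g =>
    (1 : ℚ) ⊗ₜ[ℤ] Additive.ofMul (Abelianization.of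
      (⟨(Function.surjInv hq g) * w ^ k * (Function.surjInv hq g)⁻¹,
        (inferInstance : q.ker.Normal).conj_mem _ hwk _⟩ : q.ker))
  have hψ : ∀ a b : G, (QuotientGroup.leftRel H) a b → ψ a = ψ b := by
    intro a b hab
    rw [QuotientGroup.leftRel_apply] at hab
    refine key _ _ ?_
    rw [Function.surjInv_eq hq, Function.surjInv_eq hq]
    simpa [mul_inv_rev] using inv_mem hab
  let φ : Q → ℚ ⊗[ℤ] Additive (Abelianization q.ker) := fun x => Quotient.liftOn' x ψ hψ
  have hSsub : S ⊆ Set.range φ := by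
    rintro x ⟨u, rfl⟩
    refine ⟨QuotientGroup.mk (q u), ?_⟩
    show ψ (q u) = _
    refine key _ _ ?_
    rw [Function.surjInv_eq hq, inv_mul_cancel]
    exact one_mem H
  have hQcard : Nat.card Q = Fintype.card G / k := by
    have h1 : Nat.card G = Nat.card Q * Nat.card H :=
      Subgroup.card_eq_card_quotient_mul_card_subgroup H
    have h2 : Nat.card H = k := by rw [hH, Nat.card_zpowers, hord]
    rw [h2] at h1
    rw [← Nat.card_eq_fintype_card, h1]
    rw [Nat.mul_div_cancel _ (by omega)]
  haveI hQfin : Finite Q := Quotient.finite _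
  have hfin : S.Finite := (Set.finite_range φ).subset hSsub
  have hcard : S.ncard ≤ Fintype.card G / k := by
    calc S.ncard ≤ (Set.range φ).ncard :=
          Set.ncard_le_ncard hSsub (Set.finite_range φ)
      _ ≤ Nat.card Q := by rw [← Nat.card_coe_set_eq]; exact Finite.card_range_le φ
      _ = Fintype.card G / k := hQcard
  have hlt : S.ncard < Fintype.card G :=
    lt_of_le_of_lt hcard (Nat.div_lt_self Fintype.card_pos (by omega))
  refine ⟨hfin, hcard, hlt, ?_⟩
  have := hfin.fintype
  calc Module.finrank ℚ ↥(Submodule.span ℚ S) ≤ S.toFinset.card := finrank_span_le_card S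
    _ = S.ncard := (Set.ncard_eq_toFinset_card' S).symm
    _ < Fintype.card G := hlt
end
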